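/- arXiv:2212.07077 — 4 statements merged into one kernel-verified Lean document; each statement's English description precedes it below -/
import Mathlib

section
/- Let Z be a G_δ subset of Q₀ = {x ∈ Q : x₀ = 0} in the Hilbert cube Q = [0,1]^ℕ. Then Q \ Z can be written as a countable union of compact connected subsets of Q. -/
/-!
Write `Z = Q₀ ∩ ⋂ₙ Uₙ` with `Uₙ` open. A point outside `Z` either has `x₀ > 0`, and then lies in
a slab `{x₀ ≥ 1/(n+1)}`, or has `x₀ = 0` and lies outside some `Uₙ`, hence in the closed vertical
cylinder `{x : (0, x₁, x₂, …) ∉ Uₙ}`. Slab and cylinder together form a closed, hence compact, set.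
It is connected because the slab is a product of intervals and every vertical segment
`t ↦ (t, x₁, x₂, …)` through a point of the cylinder stays in the cylinder and reaches the slab.
-/

open Set Function

section Cylinder

variable {ι : Type*} [DecidableEq ι] {X : ι → Type*} {i : ι}

theorem compl_setOf_eq_inter_iInter (a : X i) (U : ℕ → Set (∀ j, X j)) {K : ℕ → Set (X i)}
    (hK : ⋃ n, K n = {a}ᶜ) :
    ({x | x i = a} ∩ ⋂ n, U n)ᶜ = ⋃ n, (eval i ⁻¹' K n ∪ {x | update x i a ∈ (U n)ᶜ}) := by
  ext x
  have hxK : (∃ n, x i ∈ K n) ↔ x i ≠ a := by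
    simpa only [mem_iUnion, mem_compl_singleton_iff] using Set.ext_iff.mp hK (x i)
  by_cases hx : x i = a
  · have hupd : update x i a = x := hx ▸ update_eq_self i x
    simp only [hx, ne_eq, not_true_eq_false, iff_false, not_exists] at hxK
    simp [hx, hupd, hxK]
  · simp only [mem_compl_iff, mem_inter_iff, mem_ofPred_eq, hx, false_and, not_false_eq_true,
      true_iff, mem_iUnion, mem_union, mem_preimage, eval]
    obtain ⟨n, hn⟩ := hxK.mpr hx
    exact ⟨n, Or.inl hn⟩

variable [∀ j, TopologicalSpace (X j)] [∀ j, PreconnectedSpace (X j)]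

theorem IsPreconnected.eval_preimage {K : Set (X i)} (hK : IsPreconnected K) :
    IsPreconnected (eval i ⁻¹' K) := by
  rw [Set.eval_preimage]
  refine isPreconnected_univ_pi fun j => ?_
  rcases eq_or_ne j i with rfl | hj
  · simpa using hK
  · simpa [hj] using isPreconnected_univ

theorem IsPreconnected.eval_preimage_union_setOf_update_mem {K : Set (X i)}
    (hK : IsPreconnected K) (hKne : K.Nonempty) (a : X i) (F : Set (∀ j, X j)) :
    IsPreconnected (eval i ⁻¹' K ∪ {x | update x i a ∈ F}) := by
  obtain ⟨k, hk⟩ := hKne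
  rcases (eval i ⁻¹' K ∪ {x | update x i a ∈ F}).eq_empty_or_nonempty with h | ⟨y, -⟩
  · rw [h]
    exact isPreconnected_empty
  have hbase : update y i k ∈ eval i ⁻¹' K := by simpa using hk
  refine isPreconnected_of_forall (update y i k) fun z hz => ?_
  rcases hz with hzK | hzF
  · exact ⟨_, subset_union_left, hbase, hzK, hK.eval_preimage⟩
  · have hsegment : range (update z i) ⊆ {x | update x i a ∈ F} := by
      rintro _ ⟨t, rfl⟩
      simpa [update_idem] using hzF
    refine ⟨eval i ⁻¹' K ∪ range (update z i), union_subset_union_right _ hsegment,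
      Or.inl hbase, Or.inr ⟨z i, update_eq_self i z⟩, ?_⟩
    exact hK.eval_preimage.union (update z i k) (by simpa using hk) ⟨k, rfl⟩
      (isPreconnected_range (continuous_const.update i continuous_id))

end Cylinder

theorem unitInterval.iUnion_setOf_one_div_succ_le :
    ⋃ n : ℕ, {t : unitInterval | 1 / (n + 1 : ℝ) ≤ t} = {0}ᶜ := by
  ext t
  simp only [mem_iUnion, mem_ofPred_eq, mem_compl_singleton_iff]
  constructor
  · rintro ⟨n, hn⟩ rfl
    have : (0 : ℝ) < 1 / (n + 1) := by positivity
    exact absurd hn (by simpa using this)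
  · intro ht
    obtain ⟨n, hn⟩ := exists_nat_one_div_lt (unitInterval.coe_pos.mpr (unitInterval.pos_iff_ne_zero.mpr ht))
    exact ⟨n, hn.le⟩

theorem stmt_3_general (Z : Set (ℕ → unitInterval))
    (hZ : ∃ U : ℕ → Set (ℕ → unitInterval), (∀ n, IsOpen (U n)) ∧
      Z = {x | x 0 = 0} ∩ ⋂ n, U n) :
    ∃ C : ℕ → Set (ℕ → unitInterval),
      (∀ n, IsCompact (C n) ∧ IsConnected (C n)) ∧ Zᶜ = ⋃ n, C n := by
  obtain ⟨U, hU, rfl⟩ := hZ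
  set K : ℕ → Set unitInterval := fun n => {t | 1 / (n + 1 : ℝ) ≤ t}
  have hK_closed (n : ℕ) : IsClosed (K n) := isClosed_le continuous_const continuous_subtype_val
  have hK_preconnected (n : ℕ) : IsPreconnected (K n) :=
    OrdConnected.isPreconnected ⟨fun _ hx _ _ _ hz => le_trans (α := ℝ) hx hz.1⟩
  have hK_one (n : ℕ) : (1 : unitInterval) ∈ K n := by
    simpa [K] using inv_le_one_of_one_le₀ (by simp : (1 : ℝ) ≤ n + 1)
  refine ⟨fun n => eval 0 ⁻¹' K n ∪ {x | update x 0 0 ∈ (U n)ᶜ}, fun n => ⟨?_, ?_, ?_⟩,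
    compl_setOf_eq_inter_iInter 0 U unitInterval.iUnion_setOf_one_div_succ_le⟩
  · exact ((hK_closed n).preimage (continuous_apply 0)).union
      ((hU n).isClosed_compl.preimage (continuous_id.update 0 continuous_const)) |>.isCompact
  · exact ⟨fun _ => 1, Or.inl (hK_one n)⟩
  · exact (hK_preconnected n).eval_preimage_union_setOf_update_mem (X := fun _ => unitInterval)
      ⟨1, hK_one n⟩ 0 _

/-- Let `Z` be a Gδ subset of `Q₀ = {x ∈ Q : x 0 = 0}` in the Hilbert cube `Q = [0,1]^ℕ`
(i.e. `Z = Q₀ ∩ ⋂ n, U n` with each `U n` open in `Q`). Then `Q \ Z` is a countable union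
of compact connected subsets of `Q`. -/
theorem stmt_3 (Z : Set (ℕ → unitInterval)) (hZ0 : Z ⊆ {x | x 0 = 0})
    (hZ : ∃ U : ℕ → Set (ℕ → unitInterval), (∀ n, IsOpen (U n)) ∧
      Z = {x | x 0 = 0} ∩ ⋂ n, U n) :
    ∃ C : ℕ → Set (ℕ → unitInterval),
      (∀ n, IsCompact (C n) ∧ IsConnected (C n)) ∧ Zᶜ = ⋃ n, C n :=
  stmt_3_general Z hZ
end

section
/- (Boundary Bumping) Let X be a compact connected metric space, U a proper open subset of X, and K a connected component of the closure of U. Then K meets the topological boundary of U. -/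
/-!
Suppose the component `K` of `x` in `closure U` misses `closure U \ U`, i.e. `K ⊆ U`. In the
compact Hausdorff space `closure U` components are intersections of clopen sets, so by
compactness of the complement of `U` some clopen subset `C` of `closure U` satisfies
`x ∈ C ⊆ U`. Such a `C` is closed in `X` because `closure U` is, and open in `X` because it is
relatively open in the open set `U`. Connectedness of `X` forces `C = X`, hence `U = X`.
-/

open Set

theorem exists_isClopen_mem_subset_of_connectedComponent_subset {X : Type*}
    [TopologicalSpace X] [T2Space X] [CompactSpace X] {x : X} {U : Set X} (hU : IsOpen U)
    (hxU : connectedComponent x ⊆ U) : ∃ C, IsClopen C ∧ x ∈ C ∧ C ⊆ U := by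
  rw [connectedComponent_eq_iInter_isClopen] at hxU
  obtain ⟨t, ht⟩ := hU.isClosed_compl.isCompact.elim_finite_subfamily_closed
    (fun Z : {Z : Set X // IsClopen Z ∧ x ∈ Z} ↦ Z.1) (fun Z ↦ Z.2.1.1)
    (disjoint_compl_left_iff_subset.mpr hxU).inter_eq
  exact ⟨⋂ Z ∈ t, Z.1, isClopen_biInter_finset fun Z _ ↦ Z.2.1, mem_iInter₂.2 fun Z _ ↦ Z.2.2,
    disjoint_compl_left_iff_subset.mp (disjoint_iff_inter_eq_empty.mpr ht)⟩

theorem isClopen_image_val_of_subset_isOpen {X : Type*} [TopologicalSpace X] {s U : Set X}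
    (hs : IsClosed s) (hU : IsOpen U) (hUs : U ⊆ s) {C : Set s} (hC : IsClopen C)
    (hCU : (↑) '' C ⊆ U) : IsClopen ((↑) '' C : Set X) := by
  refine ⟨hs.isClosedEmbedding_subtypeVal.isClosed_iff_image_isClosed.mp hC.1, ?_⟩
  obtain ⟨O, hO, rfl⟩ := isOpen_induced_iff.mp hC.2
  rw [image_preimage_eq_inter_range, Subtype.range_coe] at hCU ⊢
  have : O ∩ s = O ∩ U :=
    Subset.antisymm (subset_inter inter_subset_left hCU) (inter_subset_inter_right _ hUs)
  exact this ▸ hO.inter hU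

/-- Boundary bumping: let `X` be a compact connected metric space, `U` a proper open
subset of `X`, and `K` a connected component of `closure U`. Then `K` meets the
boundary `closure U \ U` of `U`. -/
theorem stmt_5 (X : Type*) [MetricSpace X] [CompactSpace X] [ConnectedSpace X]
    (U : Set X) (hU : IsOpen U) (hUproper : U ≠ Set.univ)
    (x : X) (hx : x ∈ closure U) :
    (connectedComponentIn (closure U) x ∩ (closure U \ U)).Nonempty := by
  by_contra hK
  have hKU : connectedComponentIn (closure U) x ⊆ U := fun y hy ↦
    by_contra fun hyU ↦ hK ⟨y, hy, connectedComponentIn_subset _ _ hy, hyU⟩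
  have : CompactSpace (closure U) := isCompact_iff_compactSpace.mp isClosed_closure.isCompact
  rw [connectedComponentIn_eq_image hx, image_subset_iff] at hKU
  obtain ⟨C, hC, hxC, hCU⟩ := exists_isClopen_mem_subset_of_connectedComponent_subset
    (hU.preimage continuous_subtype_val) hKU
  have hCX := isClopen_image_val_of_subset_isOpen isClosed_closure hU subset_closure hC
    (image_subset_iff.mpr hCU)
  rcases isClopen_iff.mp hCX with hempty | huniv
  · exact hempty.subset (mem_image_of_mem _ hxC)
  · exact hUproper (univ_subset_iff.mp (huniv ▸ image_subset_iff.mpr hCU))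
end

section
/- In the space A obtained from P × ℕ (P a continuum, p, q ∈ P) by identifying (q,n) with (p,n+1) for each n ∈ ℕ, the space A is connected and locally compact. -/
/-!
Every equivalence class of the gluing relation has at most three points, and only points
of `{p, q} × ℕ` are glued at all. Since `{p, q} × ℕ` is closed and discrete, the saturation
of a closed set is closed, so the quotient map `P × ℕ → A` is closed with finite fibres,
i.e. proper, and a proper surjection preserves local compactness. Connectedness: `A` is the
union of the connected copies of `P`, and consecutive copies meet in the glued point.
-/

open Set Function Topology

theorem Relation.EqvGen.eq_or_mem_and_mem {X : Type*} {r : X → X → Prop} {S : Set X}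
    (hr : ∀ x y, r x y → x ∈ S ∧ y ∈ S) {x y : X} (h : EqvGen r x y) :
    x = y ∨ x ∈ S ∧ y ∈ S := by
  induction h with
  | rel x y hxy => exact Or.inr (hr x y hxy)
  | refl => exact Or.inl rfl
  | symm x y _ ih => exact ih.imp Eq.symm And.symm
  | trans x y z _ _ ihxy ihyz =>
    rcases ihxy with rfl | ⟨hx, hy⟩
    · exact ihyz
    · rcases ihyz with rfl | ⟨-, hz⟩
      exacts [Or.inr ⟨hx, hy⟩, Or.inr ⟨hx, hz⟩]

theorem isClosedMap_quot_mk {X : Type*} [TopologicalSpace X] {r : X → X → Prop} {S : Set X}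
    (hS : ∀ T ⊆ S, IsClosed T) (hr : ∀ x y, r x y → x ∈ S ∧ y ∈ S) :
    IsClosedMap (Quot.mk r) := by
  intro C hC
  rw [← isQuotientMap_quot_mk.isClosed_preimage]
  have hsat :
      Quot.mk r ⁻¹' (Quot.mk r '' C) = C ∪ (Quot.mk r ⁻¹' (Quot.mk r '' C) ∩ S) := by
    refine Subset.antisymm (fun x ⟨c, hc, hcx⟩ => ?_)
      (union_subset (subset_preimage_image _ _) inter_subset_left)
    rcases (Quot.eqvGen_exact hcx).eq_or_mem_and_mem hr with rfl | ⟨-, hx⟩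
    exacts [Or.inl hc, Or.inr ⟨⟨c, hc, hcx⟩, hx⟩]
  rw [hsat]
  exact hC.union (hS _ inter_subset_right)

theorem IsProperMap.locallyCompactSpace {X Y : Type*} [TopologicalSpace X] [TopologicalSpace Y]
    [LocallyCompactSpace X] {f : X → Y} (hf : IsProperMap f) (hsurj : Surjective f) :
    LocallyCompactSpace Y := by
  refine ⟨fun y N hN => ?_⟩
  obtain ⟨L, hL, hyL, hLN⟩ := exists_compact_between (hf.isCompact_preimage isCompact_singleton)
    (isOpen_interior.preimage hf.continuous)
    (preimage_mono (singleton_subset_iff.2 (mem_interior_iff_mem_nhds.2 hN)))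
  -- The points of `Y` whose whole fibre lies in `interior L` form an open neighbourhood of `y`.
  have hU : IsOpen (f '' (interior L)ᶜ)ᶜ :=
    (hf.isClosedMap _ isOpen_interior.isClosed_compl).isOpen_compl
  refine ⟨f '' L, Filter.mem_of_superset (hU.mem_nhds ?_) ?_,
    image_subset_iff.2 (hLN.trans (preimage_mono interior_subset)), hL.image hf.continuous⟩
  · rintro ⟨x, hx, hxy⟩
    exact hx (hyL hxy)
  · intro z hz
    obtain ⟨x, rfl⟩ := hsurj z
    exact ⟨x, interior_subset (not_not.1 fun hx => hz ⟨x, hx, rfl⟩), rfl⟩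

theorem isClosed_of_subset_prod_univ {X Y : Type*} [TopologicalSpace X] [T1Space X]
    [TopologicalSpace Y] [DiscreteTopology Y] {s : Set X} (hs : s.Finite) {T : Set (X × Y)}
    (hT : T ⊆ s ×ˢ univ) : IsClosed T := by
  have hT_eq : T = ⋃ x ∈ s, {x} ×ˢ (Prod.mk x ⁻¹' T) := by
    ext ⟨x, n⟩
    simp only [mem_iUnion, mem_prod, mem_singleton_iff, mem_preimage, exists_prop]
    exact ⟨fun h => ⟨x, (hT h).1, rfl, h⟩, fun ⟨_, _, rfl, h⟩ => h⟩
  rw [hT_eq]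
  exact hs.isClosed_biUnion fun x _ => isClosed_singleton.prod (isClosed_discrete _)

def chainRel {X : Type*} (p q : X) (a b : X × ℕ) : Prop :=
  a.1 = q ∧ b.1 = p ∧ b.2 = a.2 + 1

section chainRel

variable {X : Type*} {p q : X}

theorem chainRel.mem_and_mem {a b : X × ℕ} (h : chainRel p q a b) :
    a ∈ ({p, q} : Set X) ×ˢ univ ∧ b ∈ ({p, q} : Set X) ×ˢ univ :=
  ⟨⟨Or.inr h.1, trivial⟩, ⟨Or.inl h.2.1, trivial⟩⟩

theorem eqvGen_chainRel_iff (hpq : p ≠ q) {a b : X × ℕ} :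
    Relation.EqvGen (chainRel p q) a b ↔ a = b ∨ chainRel p q a b ∨ chainRel p q b a := by
  let s : X × ℕ → X × ℕ → Prop := fun a b =>
    a = b ∨ chainRel p q a b ∨ chainRel p q b a
  have hequiv : Equivalence s := by
    refine ⟨fun _ => Or.inl rfl, fun h => by tauto, fun {a b c} hab hbc => ?_⟩
    -- Two gluings at `b` either coincide or force `b.1 = p = q`.
    simp only [s, chainRel, Prod.ext_iff] at hab hbc ⊢
    grind
  refine ⟨fun h => ?_, ?_⟩
  · change s a b
    rw [← hequiv.eqvGen_eq]
    exact Relation.EqvGen.mono (fun a b h => Or.inr (Or.inl h)) _ _ h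
  · rintro (rfl | h | h)
    exacts [.refl a, .rel _ _ h, .symm _ _ (.rel _ _ h)]

theorem finite_preimage_quot_mk_chainRel (hpq : p ≠ q) (z : X × ℕ) :
    (Quot.mk (chainRel p q) ⁻¹' {Quot.mk _ z}).Finite := by
  refine (((finite_singleton (q, z.2 - 1)).insert (p, z.2 + 1)).insert z).subset fun w hw => ?_
  rcases (eqvGen_chainRel_iff hpq).1 (Quot.eqvGen_exact hw)
    with rfl | ⟨hw, -, hzw⟩ | ⟨-, hw, hwz⟩
  · exact mem_insert _ _
  · exact Or.inr (Or.inr (Prod.ext hw (by omega)))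
  · exact Or.inr (Or.inl (Prod.ext hw hwz))

end chainRel

theorem connectedSpace_quot_chainRel {X : Type*} [TopologicalSpace X] [ConnectedSpace X]
    (p q : X) : ConnectedSpace (Quot (chainRel p q)) := by
  let copy (n : ℕ) : Set (Quot (chainRel p q)) := range fun x => Quot.mk _ (x, n)
  have hcopy : ∀ n, IsPreconnected (copy n) := fun n =>
    isPreconnected_range (continuous_quot_mk.comp (.prodMk_left n))
  have hmeet : ∀ n, (copy n ∩ copy (Order.succ n)).Nonempty := fun n =>
    ⟨Quot.mk _ (q, n), ⟨q, rfl⟩, ⟨p, (Quot.sound ⟨rfl, rfl, rfl⟩).symm⟩⟩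
  have hcover : ⋃ n, copy n = univ :=
    eq_univ_of_forall fun y => by
      obtain ⟨⟨x, n⟩, rfl⟩ := Quot.exists_rep y
      exact mem_iUnion.2 ⟨n, x, rfl⟩
  exact { isPreconnected_univ := hcover ▸ IsPreconnected.iUnion_of_chain hcopy hmeet
          toNonempty := ⟨Quot.mk _ (p, 0)⟩ }

theorem isProperMap_quot_mk_chainRel {X : Type*} [TopologicalSpace X] [T1Space X] {p q : X}
    (hpq : p ≠ q) : IsProperMap (Quot.mk (chainRel p q)) := by
  refine isProperMap_iff_isClosedMap_and_compact_fibers.2 ⟨continuous_quot_mk, ?_, fun y => ?_⟩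
  · exact isClosedMap_quot_mk (fun T hT => isClosed_of_subset_prod_univ (toFinite _) hT)
      fun _ _ h => h.mem_and_mem
  · obtain ⟨z, rfl⟩ := Quot.exists_rep y
    exact (finite_preimage_quot_mk_chainRel hpq z).isCompact

theorem stmt_8_general (P : Type*) [MetricSpace P] [CompactSpace P] [ConnectedSpace P]
    (p q : P) (hpq : p ≠ q) :
    ConnectedSpace (Quot (fun a b : P × ℕ => a.1 = q ∧ b.1 = p ∧ b.2 = a.2 + 1)) ∧
    LocallyCompactSpace (Quot (fun a b : P × ℕ => a.1 = q ∧ b.1 = p ∧ b.2 = a.2 + 1)) :=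
  ⟨connectedSpace_quot_chainRel p q,
    (isProperMap_quot_mk_chainRel hpq).locallyCompactSpace Quot.mk_surjective⟩

/-- Let `P` be a continuum and `p ≠ q` points of `P`. The space `A` obtained from
`P × ℕ` by identifying `(q, n)` with `(p, n + 1)` for each `n` is connected and
locally compact. -/
theorem stmt_8 (P : Type*) [MetricSpace P] [CompactSpace P] [ConnectedSpace P]
    [Nonempty P] (p q : P) (hpq : p ≠ q) :
    ConnectedSpace (Quot (fun a b : P × ℕ => a.1 = q ∧ b.1 = p ∧ b.2 = a.2 + 1)) ∧
    LocallyCompactSpace (Quot (fun a b : P × ℕ => a.1 = q ∧ b.1 = p ∧ b.2 = a.2 + 1)) :=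
  stmt_8_general P p q hpq
end

section
/- Let X be a metric continuum, and let P* ⊆ X be a closed subset homeomorphic to a continuum P, with boundary Bd_X(P*) ⊆ {a, b} for two points a, b ∈ P*. Let t ∈ P* be a point whose composant in P* contains neither a nor b. Then every subcontinuum E of X containing t either is contained in the composant of t in P* (hence contained in P* \ {a,b}) or contains all of P*. -/
/-!
Boundary bumping: if the subcontinuum `E` leaves `P*`, the component of `t` in `E ∩ P*` is a
subcontinuum of `P*` through `t` that reaches `Bd P* ⊆ {a, b}`. It cannot be proper, since then
it would put `a` or `b` into the composant of `t`; so it is `P*` itself, and `P* ⊆ E`.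
-/

/-- The composant of a point `t` in a subset `Pstar` of a space `X`: the union of all
proper subcontinua of `Pstar` containing `t`. -/
def composantIn {X : Type*} [TopologicalSpace X] (Pstar : Set X) (t : X) : Set X :=
  ⋃₀ {K : Set X | K ⊆ Pstar ∧ IsCompact K ∧ IsConnected K ∧ K ≠ Pstar ∧ t ∈ K}

open Set

section ConnectedComponents

variable {Y : Type*} [TopologicalSpace Y]

theorem IsClosed.isClosed_connectedComponentIn {F : Set Y} (hF : IsClosed F) (y : Y) :
    IsClosed (connectedComponentIn F y) := by
  refine closure_subset_iff_isClosed.mp ?_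
  rcases (connectedComponentIn F y).eq_empty_or_nonempty with h | h
  · simp [h]
  have hy : y ∈ F := connectedComponentIn_nonempty_iff.mp h
  exact isPreconnected_connectedComponentIn.closure.subset_connectedComponentIn
    (subset_closure (mem_connectedComponentIn hy))
    (closure_minimal (connectedComponentIn_subset F y) hF)

/-- In a compact Hausdorff space a component equals its quasi-component, so a closed set missing
the component of `y` is already missed by some clopen neighbourhood of `y`. -/
theorem exists_isClopen_mem_disjoint_of_disjoint_connectedComponent [CompactSpace Y]
    [T2Space Y] {B : Set Y} (hB : IsClosed B) {y : Y} (h : Disjoint (connectedComponent y) B) :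
    ∃ U, IsClopen U ∧ y ∈ U ∧ Disjoint U B := by
  rw [connectedComponent_eq_iInter_isClopen, disjoint_iff_inter_eq_empty, inter_comm] at h
  obtain ⟨u, hu⟩ := hB.isCompact.elim_finite_subfamily_closed _ (fun s => s.2.1.1) h
  refine ⟨⋂ s ∈ u, (s : Set Y), isClopen_biInter_finset fun s _ => s.2.1,
    mem_iInter₂.mpr fun s _ => s.2.2, ?_⟩
  rw [disjoint_iff_inter_eq_empty, inter_comm, hu]

/-- A relatively clopen subset of a closed set `F` that stays away from `frontier F` lies in
`interior F`, which makes it open in the whole space. -/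
theorem IsClosed.isClopen_image_val_of_disjoint_frontier {F : Set Y} (hF : IsClosed F)
    {Z : Set F} (hZ : IsClopen Z) (hZfr : Disjoint Z (Subtype.val ⁻¹' frontier F)) :
    IsClopen (Subtype.val '' Z) := by
  refine ⟨hF.isClosedMap_subtype_val Z hZ.isClosed, ?_⟩
  have hint : Subtype.val '' Z ⊆ interior F := by
    rintro _ ⟨x, hxZ, rfl⟩
    by_contra hx
    exact disjoint_left.mp hZfr hxZ ⟨subset_closure x.2, hx⟩
  obtain ⟨U, hU, rfl⟩ := isOpen_induced_iff.mp hZ.isOpen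
  rw [Subtype.image_preimage_coe] at hint ⊢
  have : F ∩ U = U ∩ interior F :=
    Subset.antisymm (fun x hx => ⟨hx.2, hint hx⟩) (fun x hx => ⟨interior_subset hx.2, hx.1⟩)
  rw [this]
  exact hU.inter isOpen_interior

theorem connectedComponentIn_inter_frontier_nonempty [CompactSpace Y] [T2Space Y]
    [ConnectedSpace Y] {F : Set Y} (hF : IsClosed F) (hFne : F ≠ univ) {y : Y} (hy : y ∈ F) :
    (connectedComponentIn F y ∩ frontier F).Nonempty := by
  rw [← not_disjoint_iff_nonempty_inter]
  intro hdisj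
  have : CompactSpace F := isCompact_iff_compactSpace.mp hF.isCompact
  rw [connectedComponentIn_eq_image hy, disjoint_image_left] at hdisj
  obtain ⟨Z, hZ, hyZ, hZfr⟩ := exists_isClopen_mem_disjoint_of_disjoint_connectedComponent
    (isClosed_frontier.preimage continuous_subtype_val) hdisj
  have hZuniv : Subtype.val '' Z = univ :=
    (hF.isClopen_image_val_of_disjoint_frontier hZ hZfr).eq_univ ⟨y, mem_image_of_mem _ hyZ⟩
  exact hFne (univ_subset_iff.mp (hZuniv ▸ Subtype.coe_image_subset F Z))

end ConnectedComponents

theorem exists_isConnected_subset_inter_meets_frontier {X : Type*} [TopologicalSpace X]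
    [T2Space X] {E F : Set X} (hEc : IsCompact E) (hEconn : IsConnected E) (hF : IsClosed F)
    (hEF : ¬E ⊆ F) {y : X} (hyE : y ∈ E) (hyF : y ∈ F) :
    ∃ K ⊆ E ∩ F, IsCompact K ∧ IsConnected K ∧ y ∈ K ∧ (K ∩ frontier F).Nonempty := by
  have : CompactSpace E := isCompact_iff_compactSpace.mp hEc
  have : ConnectedSpace E := Subtype.connectedSpace hEconn
  set G : Set E := Subtype.val ⁻¹' F
  have hG : IsClosed G := hF.preimage continuous_subtype_val
  have hGne : G ≠ univ := fun h => hEF fun x hx => show x ∈ F from eq_univ_iff_forall.mp h ⟨x, hx⟩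
  have hyG : (⟨y, hyE⟩ : E) ∈ G := hyF
  obtain ⟨z, hzC, hzfr⟩ := connectedComponentIn_inter_frontier_nonempty hG hGne hyG
  refine ⟨Subtype.val '' connectedComponentIn G ⟨y, hyE⟩, ?_, ?_, ?_, ?_, ?_⟩
  · rintro _ ⟨x, hx, rfl⟩
    exact ⟨x.2, connectedComponentIn_subset G _ hx⟩
  · exact ((hG.isClosed_connectedComponentIn _).isCompact).image continuous_subtype_val
  · exact (isConnected_connectedComponentIn_iff.mpr hyG).image _
      continuous_subtype_val.continuousOn
  · exact mem_image_of_mem _ (mem_connectedComponentIn hyG)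
  · exact ⟨z, mem_image_of_mem _ hzC, continuous_subtype_val.frontier_preimage_subset F hzfr⟩

theorem subset_composantIn {X : Type*} [TopologicalSpace X] {P K : Set X} {t : X}
    (hKP : K ⊆ P) (hKc : IsCompact K) (hKconn : IsConnected K) (hKne : K ≠ P) (htK : t ∈ K) :
    K ⊆ composantIn P t :=
  subset_sUnion_of_mem ⟨hKP, hKc, hKconn, hKne, htK⟩

theorem stmt_17_general (X : Type*) [MetricSpace X]
    (Pstar : Set X) (hPcl : IsClosed Pstar)
    (a b : X)
    (hfr : frontier Pstar ⊆ {a, b})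
    (t : X) (htP : t ∈ Pstar)
    (hta : a ∉ composantIn Pstar t) (htb : b ∉ composantIn Pstar t)
    (E : Set X) (hEc : IsCompact E) (hEconn : IsConnected E) (htE : t ∈ E) :
    E ⊆ composantIn Pstar t ∨ Pstar ⊆ E := by
  by_cases hEP : E ⊆ Pstar
  · rcases eq_or_ne E Pstar with rfl | hne
    · exact Or.inr subset_rfl
    · exact Or.inl (subset_composantIn hEP hEc hEconn hne htE)
  obtain ⟨K, hKEP, hKc, hKconn, htK, z, hzK, hzfr⟩ :=
    exists_isConnected_subset_inter_meets_frontier hEc hEconn hPcl hEP htE htP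
  by_cases hKP : K = Pstar
  · exact Or.inr (hKP ▸ hKEP.trans inter_subset_left)
  have hz : z ∈ composantIn Pstar t :=
    subset_composantIn (hKEP.trans inter_subset_right) hKc hKconn hKP htK hzK
  rcases hfr hzfr with rfl | rfl
  exacts [absurd hz hta, absurd hz htb]

/-- Let `X` be a continuum and `P* ⊆ X` a closed connected (hence subcontinuum) subset
with boundary contained in `{a, b}` for points `a, b ∈ P*`. Let `t ∈ P*` be a point
whose composant in `P*` contains neither `a` nor `b`. Then every subcontinuum `E` of
`X` containing `t` is either contained in the composant of `t` in `P*` or contains all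
of `P*`. -/
theorem stmt_17 (X : Type*) [MetricSpace X] [CompactSpace X] [ConnectedSpace X]
    (Pstar : Set X) (hPcl : IsClosed Pstar) (hPconn : IsConnected Pstar)
    (a b : X) (ha : a ∈ Pstar) (hb : b ∈ Pstar)
    (hfr : frontier Pstar ⊆ {a, b})
    (t : X) (htP : t ∈ Pstar)
    (hta : a ∉ composantIn Pstar t) (htb : b ∉ composantIn Pstar t)
    (E : Set X) (hEc : IsCompact E) (hEconn : IsConnected E) (htE : t ∈ E) :
    E ⊆ composantIn Pstar t ∨ Pstar ⊆ E :=
  stmt_17_general X Pstar hPcl a b hfr t htP hta htb E hEc hEconn htE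
end
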